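/- arXiv:quant-ph/0606093 — 2 statements merged into one kernel-verified Lean document; each statement's English description precedes it below -/
import Mathlib

section
/- Perfect information transfer maps the commutant of the pointer into the commutant of the image: if B ∈ B(K) is self-adjoint with (B,B) = 0, and X ∈ B(K) satisfies [X,B] = 0, then [Φ(X), Φ(B)] = 0. -/
/-! With `D = 1 - V V†`, which is positive because `‖V‖ ≤ 1`, one has
`Φ(X) Φ(Y) = Φ(XY) - V† X D Y V`, hence `(B, B) = (BV)† D (BV)`. Writing `D = √D √D`, its
vanishing forces `D B V = 0`, and taking adjoints `V† B D = 0`. So `B` lies in the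
multiplicative domain of `Φ`, and `Φ(X) Φ(B) = Φ(XB) = Φ(BX) = Φ(B) Φ(X)`. -/

open ContinuousLinearMap

variable {H K : Type*} [NormedAddCommGroup H] [InnerProductSpace ℂ H] [CompleteSpace H]
  [NormedAddCommGroup K] [InnerProductSpace ℂ K] [CompleteSpace K]

/-- The completely positive map `Φ(X) = V† X V` in Stinespring form. -/
noncomputable def stinespring (V : H →L[ℂ] K) (X : K →L[ℂ] K) : H →L[ℂ] H :=
  adjoint V ∘L X ∘L V

/-- The operator-valued sesquilinear form `(X, Y) := Φ(X†Y) − Φ(X)†Φ(Y)`. -/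
noncomputable def sesq (V : H →L[ℂ] K) (X Y : K →L[ℂ] K) : H →L[ℂ] H :=
  stinespring V (adjoint X ∘L Y) - adjoint (stinespring V X) ∘L stinespring V Y

namespace ContinuousLinearMap

theorem comp_eq_zero_of_adjoint_comp_comp_eq_zero {P : K →L[ℂ] K} (hP : 0 ≤ P)
    {T : H →L[ℂ] K} (h : adjoint T ∘L P ∘L T = 0) : P ∘L T = 0 := by
  have hsqrt : IsSelfAdjoint (CFC.sqrt P) := (CFC.sqrt_nonneg P).isSelfAdjoint
  have hsqrtT : CFC.sqrt P ∘L T = 0 := by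
    rwa [← adjoint_comp_self_eq_zero_iff, adjoint_comp, hsqrt.adjoint_eq, comp_assoc,
      ← comp_assoc _ _ T, ← mul_def, CFC.sqrt_mul_sqrt_self P]
  rw [← CFC.sqrt_mul_sqrt_self P, mul_def, comp_assoc, hsqrtT, comp_zero]

end ContinuousLinearMap

noncomputable def defect (V : H →L[ℂ] K) : K →L[ℂ] K := 1 - V ∘L adjoint V

theorem defect_nonneg {V : H →L[ℂ] K} (hV : ‖V‖ ≤ 1) : 0 ≤ defect V := by
  have hVV : IsSelfAdjoint (V ∘L adjoint V) := by
    simpa using (isPositive_self_comp_adjoint V).isSelfAdjoint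
  have hnorm : ‖V ∘L adjoint V‖ ≤ 1 := by
    have h := norm_adjoint_comp_self (adjoint V)
    rw [adjoint_adjoint, LinearIsometryEquiv.norm_map] at h
    exact h ▸ mul_le_one₀ hV (norm_nonneg V) hV
  rw [defect, sub_nonneg]
  calc V ∘L adjoint V ≤ algebraMap ℝ (K →L[ℂ] K) ‖V ∘L adjoint V‖ := hVV.le_algebraMap_norm_self
    _ ≤ algebraMap ℝ (K →L[ℂ] K) 1 := by gcongr
    _ = 1 := map_one _

theorem stinespring_comp_stinespring (V : H →L[ℂ] K) (X Y : K →L[ℂ] K) :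
    stinespring V X ∘L stinespring V Y
      = stinespring V (X ∘L Y) - adjoint V ∘L X ∘L defect V ∘L Y ∘L V := by
  simp only [stinespring, defect, sub_comp, comp_sub, one_def, id_comp, comp_assoc]
  abel

theorem stinespring_comp_stinespring_of_defect_comp {V : H →L[ℂ] K} {Y : K →L[ℂ] K}
    (h : defect V ∘L Y ∘L V = 0) (X : K →L[ℂ] K) :
    stinespring V X ∘L stinespring V Y = stinespring V (X ∘L Y) := by
  rw [stinespring_comp_stinespring, h, comp_zero, comp_zero, sub_zero]

theorem stinespring_comp_stinespring_of_comp_defect {V : H →L[ℂ] K} {X : K →L[ℂ] K}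
    (h : adjoint V ∘L X ∘L defect V = 0) (Y : K →L[ℂ] K) :
    stinespring V X ∘L stinespring V Y = stinespring V (X ∘L Y) := by
  rw [stinespring_comp_stinespring, ← comp_assoc X, ← comp_assoc, h, zero_comp, sub_zero]

theorem adjoint_stinespring (V : H →L[ℂ] K) (X : K →L[ℂ] K) :
    adjoint (stinespring V X) = stinespring V (adjoint X) := by
  simp only [stinespring, adjoint_comp, adjoint_adjoint, comp_assoc]

theorem sesq_eq_adjoint_comp_defect_comp (V : H →L[ℂ] K) (X Y : K →L[ℂ] K) :
    sesq V X Y = adjoint (X ∘L V) ∘L defect V ∘L Y ∘L V := by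
  rw [sesq, adjoint_stinespring, stinespring_comp_stinespring, sub_sub_cancel, adjoint_comp,
    comp_assoc]

/-- Perfect information transfer maps the commutant of the pointer into the commutant
of the image: if `B` is self-adjoint with `(B,B) = 0` and `[X,B] = 0`, then
`[Φ(X), Φ(B)] = 0`. -/
theorem stinespring_commutant (V : H →L[ℂ] K) (hV : ‖V‖ ≤ 1) (B X : K →L[ℂ] K)
    (hB : IsSelfAdjoint B) (hBB : sesq V B B = 0)
    (hXB : X ∘L B - B ∘L X = 0) :
    stinespring V X ∘L stinespring V B - stinespring V B ∘L stinespring V X = 0 := by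
  have hD := defect_nonneg hV
  have hDBV : defect V ∘L B ∘L V = 0 := by
    refine comp_eq_zero_of_adjoint_comp_comp_eq_zero hD ?_
    rwa [← sesq_eq_adjoint_comp_defect_comp]
  have hVBD : adjoint V ∘L B ∘L defect V = 0 := by
    simpa [adjoint_comp, hB.adjoint_eq, hD.isSelfAdjoint.adjoint_eq, comp_assoc]
      using congrArg adjoint hDBV
  rw [stinespring_comp_stinespring_of_defect_comp hDBV,
    stinespring_comp_stinespring_of_comp_defect hVBD, sub_eq_zero.mp hXB, sub_self]
end

section
/- Joint measurement bound: if B and B̃ are commuting self-adjoint operators in B(K), and we set A := Φ(B), Ã := Φ(B̃), Σ_B := ‖(B,B)‖^{1/2} and Σ_{B̃} := ‖(B̃,B̃)‖^{1/2}, then Σ_B · Σ_{B̃} ≥ (1/2) ‖[A, Ã]‖. -/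
/-!
Since `‖V‖ ≤ 1`, the defect `P := 1 - V V†` is positive and `(X, Y) = (X V)† P (Y V)`, so the
form obeys the operator Cauchy–Schwarz inequality `‖(X, Y)‖ ≤ Σ_X Σ_Y`. For commuting self-adjoint
`B`, `B̃` the commutator `[Φ(B), Φ(B̃)]` equals `(B̃, B) - (B, B̃)`, whence `‖[A, Ã]‖ ≤ 2 Σ_B Σ_B̃`.
-/

open ContinuousLinearMap

variable {H K : Type*} [NormedAddCommGroup H] [InnerProductSpace ℂ H] [CompleteSpace H]
  [NormedAddCommGroup K] [InnerProductSpace ℂ K] [CompleteSpace K]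

theorem norm_adjoint_comp_le_sqrt_mul_sqrt {E F G : Type*}
    [NormedAddCommGroup E] [InnerProductSpace ℂ E] [CompleteSpace E]
    [NormedAddCommGroup F] [InnerProductSpace ℂ F] [CompleteSpace F]
    [NormedAddCommGroup G] [InnerProductSpace ℂ G] [CompleteSpace G]
    (S : E →L[ℂ] G) (T : F →L[ℂ] G) :
    ‖adjoint S ∘L T‖ ≤ √‖adjoint S ∘L S‖ * √‖adjoint T ∘L T‖ := by
  rw [norm_adjoint_comp_self, norm_adjoint_comp_self, Real.sqrt_mul_self (norm_nonneg _),
    Real.sqrt_mul_self (norm_nonneg _)]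
  calc ‖adjoint S ∘L T‖ ≤ ‖adjoint S‖ * ‖T‖ := opNorm_comp_le _ _
    _ = ‖S‖ * ‖T‖ := by rw [LinearIsometryEquiv.norm_map]

theorem norm_adjoint_comp_comp_le_of_nonneg {E F : Type*}
    [NormedAddCommGroup E] [InnerProductSpace ℂ E] [CompleteSpace E]
    [NormedAddCommGroup F] [InnerProductSpace ℂ F] [CompleteSpace F]
    {P : K →L[ℂ] K} (hP : 0 ≤ P) (S : E →L[ℂ] K) (T : F →L[ℂ] K) :
    ‖adjoint S ∘L P ∘L T‖ ≤ √‖adjoint S ∘L P ∘L S‖ * √‖adjoint T ∘L P ∘L T‖ := by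
  -- Factor `P = R† R` through `R = √P`; then it is `‖S† T‖ ≤ ‖S‖ ‖T‖` for `R S`, `R T`.
  obtain ⟨R, rfl⟩ : ∃ R : K →L[ℂ] K, P = adjoint R ∘L R :=
    ⟨CFC.sqrt P, by
      rw [← star_eq_adjoint, (CFC.sqrt_nonneg P).isSelfAdjoint.star_eq]
      exact (CFC.sqrt_mul_sqrt_self P).symm⟩
  simpa only [adjoint_comp, comp_assoc] using norm_adjoint_comp_le_sqrt_mul_sqrt (R ∘L S) (R ∘L T)

theorem one_sub_comp_adjoint_nonneg {V : H →L[ℂ] K} (hV : ‖V‖ ≤ 1) :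
    0 ≤ 1 - V ∘L adjoint V := by
  have hnonneg : 0 ≤ V ∘L adjoint V :=
    (nonneg_iff_isPositive _).mpr (isPositive_self_comp_adjoint V)
  have hnorm : ‖V ∘L adjoint V‖ = ‖V‖ * ‖V‖ := by
    simpa [LinearIsometryEquiv.norm_map] using norm_adjoint_comp_self (adjoint V)
  rw [sub_nonneg, ← CStarAlgebra.norm_le_one_iff_of_nonneg _ hnonneg, hnorm]
  nlinarith [norm_nonneg V]

theorem sesq_eq_adjoint_comp_comp (V : H →L[ℂ] K) (X Y : K →L[ℂ] K) :
    sesq V X Y = adjoint (X ∘L V) ∘L (1 - V ∘L adjoint V) ∘L (Y ∘L V) := by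
  simp only [sesq, stinespring, adjoint_comp, adjoint_adjoint]
  ext; simp

theorem norm_sesq_le (V : H →L[ℂ] K) (hV : ‖V‖ ≤ 1) (X Y : K →L[ℂ] K) :
    ‖sesq V X Y‖ ≤ √‖sesq V X X‖ * √‖sesq V Y Y‖ := by
  simp only [sesq_eq_adjoint_comp_comp]
  exact norm_adjoint_comp_comp_le_of_nonneg (one_sub_comp_adjoint_nonneg hV) _ _

theorem stinespring_commutator_eq (V : H →L[ℂ] K) {B B' : K →L[ℂ] K}
    (hB : IsSelfAdjoint B) (hB' : IsSelfAdjoint B') (hBB' : B ∘L B' = B' ∘L B) :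
    stinespring V B ∘L stinespring V B' - stinespring V B' ∘L stinespring V B =
      sesq V B' B - sesq V B B' := by
  simp only [sesq, adjoint_stinespring, hB.adjoint_eq, hB'.adjoint_eq, hBB']
  abel

/-- Joint measurement bound: for commuting self-adjoint pointers `B`, `B̃`, with
`A := Φ(B)`, `Ã := Φ(B̃)`, `Σ_B := ‖(B,B)‖^(1/2)`, `Σ_B̃ := ‖(B̃,B̃)‖^(1/2)`,
one has `Σ_B Σ_B̃ ≥ ½ ‖[A,Ã]‖`. -/
theorem joint_measurement_bound (V : H →L[ℂ] K) (hV : ‖V‖ ≤ 1) (B B' : K →L[ℂ] K)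
    (hB : IsSelfAdjoint B) (hB' : IsSelfAdjoint B')
    (hBB' : B ∘L B' = B' ∘L B) :
    Real.sqrt ‖sesq V B B‖ * Real.sqrt ‖sesq V B' B'‖ ≥
      (1 / 2) * ‖stinespring V B ∘L stinespring V B' -
        stinespring V B' ∘L stinespring V B‖ := by
  rw [stinespring_commutator_eq V hB hB' hBB']
  have hBB'_le := norm_sesq_le V hV B B'
  have hB'B_le := norm_sesq_le V hV B' B
  linarith [norm_sub_le (sesq V B' B) (sesq V B B'), mul_comm √‖sesq V B B‖ √‖sesq V B' B'‖]
end
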